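/- Fix n, q ≥ 2, a partition ν = (ν_1,...,ν_ℓ) with ν_1 ≤ n, and k ≥ 1 with k + ℓ ≤ q - 1. For each choice of subsets 1 ≤ i^j_1 < ... < i^j_{ν_j} ≤ n (1 ≤ j ≤ ℓ), set c_i = #{(b,u) : i^b_u = i}. With ρ_i = n - i, the assignment λ̄_n = λ_n - 1, λ̄_{i-1} = λ_{i-1} + k - ((q-1)ρ_i + qλ_i - c_i) for 2 ≤ i ≤ n, defines a bijection between dominant λ ∈ ℤ^n satisfying (q-1)ρ_i + (q-1)λ_i - k - c_i ≥ 0 for all 1 ≤ i ≤ n and (q-1)ρ_i + qλ_i - c_i ≤ λ_{i-1} + k for 2 ≤ i ≤ n, and tuples (λ̄_1,...,λ̄_n) ∈ ℤ_+^n. Under this bijection, (q-1)Σρ_i + (q-1)Σλ_i - nk - |ν| = Σ_{i=1}^n (q^i - 1)λ̄_i - n + (q-k)(q^n-1)/(q-1) - Σ_{b,u} q^{i^b_u - 1}. -/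

import Mathlib

/-! Write `a_i` for the slack of the inequality `(q-1)ρ_i + (q-1)λ_i - k - c_i ≥ 0`. Then
`λ̄_{i-1} = λ_{i-1} - λ_i - a_i` and `λ̄_n = λ_n - 1`: a backward recurrence with unit
diagonal, so `λ ↦ λ̄` is a bijection of `ℤⁿ`. Given the inequalities, `λ̄_{i-1} ≥ 0` is the second
one, and `a_n ≥ 0` with `k ≥ 1` forces `λ_n ≥ 1`. Conversely, if `λ̄ ≥ 0` then `λ_n ≥ 1`, so
`a_n ≥ 0` because `c_n ≤ ℓ ≤ q - 1 - k`, and `a_{i-1} = q a_i + (q-1)(1 + λ̄_{i-1}) - c_{i-1} + c_i`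
propagates `a ≥ 0` downwards; dominance is `λ_{i-1} - λ_i = λ̄_{i-1} + a_i ≥ 0`.
The sum formula is Abel summation against the weights `q^i - 1`, written in terms of `λ + ρ`. -/

open Finset

/-- The multiplicity `c_i = #{(b,u) : i^b_u = i}` of Statement 12, where the index sets
`{i^j_1 < ⋯ < i^j_{ν_j}} ⊆ {1,…,n}` are encoded as subsets `I j ⊆ Fin n` (`0`-based). -/
noncomputable def stmt12c {n l : ℕ} (I : Fin l → Finset (Fin n)) (i : Fin n) : ℕ :=
  (Finset.univ.filter fun j : Fin l => i ∈ I j).card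

/-- The map `λ ↦ λ̄` of Statement 12 (`0`-based indices):
`λ̄_n = λ_n - 1` and `λ̄_{i-1} = λ_{i-1} + k - ((q-1)ρ_i + qλ_i - c_i)` for `2 ≤ i ≤ n`,
with `ρ_i = n - i`. -/
noncomputable def stmt12Map (n q k l : ℕ) (I : Fin l → Finset (Fin n)) (lam : Fin n → ℤ) :
    Fin n → ℤ :=
  fun i =>
    if h : (i : ℕ) = n - 1 then lam i - 1
    else
      lam i + k - (((q : ℤ) - 1) * ((n : ℤ) - 1 - ((i : ℕ) + 1))
          + q * lam ⟨(i : ℕ) + 1, by omega⟩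
          - stmt12c I ⟨(i : ℕ) + 1, by omega⟩)

theorem bijective_of_backward_recurrence {G : Type*} [AddGroup G] {m : ℕ}
    (F : (Fin (m + 1) → G) → Fin (m + 1) → G) (g : Fin m → G → G) (b : G)
    (hlast : ∀ x, F x (Fin.last m) = x (Fin.last m) - b)
    (hcastSucc : ∀ x j, F x j.castSucc = x j.castSucc - g j (x j.succ)) :
    F.Bijective := by
  let solve (y : Fin (m + 1) → G) : Fin (m + 1) → G :=
    Fin.reverseInduction (y (Fin.last m) + b) fun j v => y j.castSucc + g j v
  refine Function.bijective_iff_has_inverse.mpr ⟨solve, fun x => funext fun i => ?_,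
    fun y => funext fun i => ?_⟩
  · induction i using Fin.reverseInduction with
    | last => simp [solve, Fin.reverseInduction_last, hlast]
    | cast j ih =>
      simp only [solve, Fin.reverseInduction_castSucc] at ih ⊢
      rw [ih, hcastSucc, sub_add_cancel]
  · induction i using Fin.lastCases with
    | last => simp [solve, Fin.reverseInduction_last, hlast]
    | cast j => simp [solve, Fin.reverseInduction_castSucc, hcastSucc]

theorem sum_sum_mem_eq_sum_stmt12c_smul {M : Type*} [AddCommMonoid M] {n l : ℕ}
    (I : Fin l → Finset (Fin n)) (f : Fin n → M) :
    ∑ j, ∑ i ∈ I j, f i = ∑ i, stmt12c I i • f i := by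
  classical
  calc ∑ j, ∑ i ∈ I j, f i = ∑ j, ∑ i, if i ∈ I j then f i else 0 := by
        simp [Finset.sum_ite_mem]
    _ = ∑ i, stmt12c I i • f i := by
        rw [Finset.sum_comm]
        simp only [stmt12c, ← Finset.sum_filter, Finset.sum_const]

theorem stmt12c_le {n l : ℕ} (I : Fin l → Finset (Fin n)) (i : Fin n) : stmt12c I i ≤ l :=
  (Finset.card_filter_le _ _).trans_eq (Finset.card_fin l)

-- Takes the value `v = λ_i` rather than `λ`, so that `λ̄_{i-1}` is visibly a function of
-- `λ_{i-1}` and `λ_i` alone.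
def stmt12Slack (n q k : ℕ) (c : Fin n → ℕ) (i : Fin n) (v : ℤ) : ℤ :=
  ((q : ℤ) - 1) * ((n : ℤ) - 1 - (i : ℕ)) + ((q : ℤ) - 1) * v - k - c i

def stmt12Domain (n q k l : ℕ) (I : Fin l → Finset (Fin n)) : Set (Fin n → ℤ) :=
  {lam : Fin n → ℤ | Antitone lam ∧
        (∀ i : Fin n,
          0 ≤ ((q : ℤ) - 1) * ((n : ℤ) - 1 - (i : ℕ)) + ((q : ℤ) - 1) * lam i - k
                - stmt12c I i) ∧
        (∀ i : Fin n, 0 < (i : ℕ) →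
          ((q : ℤ) - 1) * ((n : ℤ) - 1 - (i : ℕ)) + q * lam i - stmt12c I i
            ≤ lam ⟨(i : ℕ) - 1, by omega⟩ + k)}

section

variable {m q k l : ℕ} (I : Fin l → Finset (Fin (m + 1))) (lam : Fin (m + 1) → ℤ)

theorem stmt12Map_last : stmt12Map (m + 1) q k l I lam (Fin.last m) = lam (Fin.last m) - 1 := by
  simp [stmt12Map]

theorem stmt12Map_castSucc (j : Fin m) :
    stmt12Map (m + 1) q k l I lam j.castSucc
      = lam j.castSucc - lam j.succ - stmt12Slack (m + 1) q k (stmt12c I) j.succ (lam j.succ) := by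
  have hj : (j : ℕ) ≠ m := j.isLt.ne
  have hsucc : (⟨(j : ℕ) + 1, by omega⟩ : Fin (m + 1)) = j.succ := rfl
  simp only [stmt12Map, stmt12Slack, Fin.val_castSucc, hsucc, Fin.val_succ,
    add_tsub_cancel_right, hj, dif_neg, not_false_eq_true]
  push_cast
  ring

theorem stmt12Slack_last (c : Fin (m + 1) → ℕ) (v : ℤ) :
    stmt12Slack (m + 1) q k c (Fin.last m) v = ((q : ℤ) - 1) * v - k - c (Fin.last m) := by
  simp [stmt12Slack]

theorem stmt12Slack_castSucc (c : Fin (m + 1) → ℕ) (j : Fin m) (v w : ℤ) :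
    stmt12Slack (m + 1) q k c j.castSucc v
      = stmt12Slack (m + 1) q k c j.succ w + ((q : ℤ) - 1) * (1 + v - w)
        - c j.castSucc + c j.succ := by
  simp only [stmt12Slack, Fin.val_castSucc, Fin.val_succ]
  push_cast
  ring

theorem forall_le_pred_iff_stmt12Map_castSucc_nonneg :
    (∀ i : Fin (m + 1), 0 < (i : ℕ) →
        ((q : ℤ) - 1) * (((m + 1 : ℕ) : ℤ) - 1 - (i : ℕ)) + q * lam i - stmt12c I i
          ≤ lam ⟨(i : ℕ) - 1, by omega⟩ + k) ↔
      ∀ j : Fin m, 0 ≤ stmt12Map (m + 1) q k l I lam j.castSucc := by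
  simp only [Fin.forall_fin_succ, Fin.val_zero, lt_irrefl, IsEmpty.forall_iff, true_and,
    Fin.val_succ, Nat.zero_lt_succ, forall_const, stmt12Map_castSucc, stmt12Slack]
  refine forall_congr' fun j => ?_
  have hpred : (⟨(j : ℕ) + 1 - 1, by omega⟩ : Fin (m + 1)) = j.castSucc := Fin.ext (by simp)
  rw [hpred]
  push_cast
  constructor <;> intro h <;> linarith

theorem mem_stmt12Domain_iff (hk : 1 ≤ k) (hkl : k + l ≤ q - 1) :
    lam ∈ stmt12Domain (m + 1) q k l I ↔ ∀ i, 0 ≤ stmt12Map (m + 1) q k l I lam i := by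
  have hk' : (1 : ℤ) ≤ k := by exact_mod_cast hk
  have hkl' : (k : ℤ) + l ≤ q - 1 := by omega
  have hq1 : (0 : ℤ) ≤ q - 1 := by omega
  have hc_le (i) : (stmt12c I i : ℤ) ≤ l := by exact_mod_cast stmt12c_le I i
  simp only [stmt12Domain, Set.mem_ofPred_eq, forall_le_pred_iff_stmt12Map_castSucc_nonneg]
  change _ ∧ (∀ i, 0 ≤ stmt12Slack (m + 1) q k (stmt12c I) i (lam i)) ∧ _ ↔ _
  constructor
  · rintro ⟨-, hslack, hstep⟩ i
    induction i using Fin.lastCases with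
    | last =>
      have h := hslack (Fin.last m)
      rw [stmt12Slack_last] at h
      have : 0 < ((q : ℤ) - 1) * lam (Fin.last m) := by
        linarith [Int.natCast_nonneg (stmt12c I (Fin.last m))]
      rw [stmt12Map_last]
      linarith [pos_of_mul_pos_right this hq1]
    | cast j => exact hstep j
  · intro hF
    have hstep (j : Fin m) := hF j.castSucc
    have hlast := hF (Fin.last m)
    rw [stmt12Map_last] at hlast
    have hslack (i) : 0 ≤ stmt12Slack (m + 1) q k (stmt12c I) i (lam i) := by
      induction i using Fin.reverseInduction with
      | last =>
        rw [stmt12Slack_last]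
        linarith [mul_nonneg hq1 hlast, hc_le (Fin.last m)]
      | cast j ih =>
        have h := hstep j
        rw [stmt12Map_castSucc] at h
        rw [stmt12Slack_castSucc _ j _ (lam j.succ)]
        have hdiff : 0 ≤ lam j.castSucc - lam j.succ := by linarith
        linarith [mul_nonneg hq1 hdiff, hc_le j.castSucc, Int.natCast_nonneg (stmt12c I j.succ)]
    refine ⟨Fin.antitone_iff_succ_le.mpr fun j => ?_, hslack, hstep⟩
    have h := hstep j
    rw [stmt12Map_castSucc] at h
    linarith [hslack j.succ]

theorem sum_pow_sub_one_mul_stmt12Map :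
    ∑ i : Fin (m + 1), ((q : ℤ) ^ ((i : ℕ) + 1) - 1) * stmt12Map (m + 1) q k l I lam i
      = ((q : ℤ) - 1) * ∑ i : Fin (m + 1), ((((m + 1 : ℕ) : ℤ) - 1 - (i : ℕ)) + lam i)
        + ∑ i : Fin (m + 1), (k - 1 + stmt12c I i) * ((q : ℤ) ^ (i : ℕ) - 1)
        - ((q : ℤ) ^ (m + 1) - 1) := by
  set s : Fin (m + 1) → ℤ := fun i => (((m + 1 : ℕ) : ℤ) - 1 - (i : ℕ)) + lam i
  set P : Fin (m + 1) → ℤ := fun i => ((q : ℤ) ^ ((i : ℕ) + 1) - q) * s i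
  have hterm (j : Fin m) :
      ((q : ℤ) ^ ((j.castSucc : ℕ) + 1) - 1) * stmt12Map (m + 1) q k l I lam j.castSucc
        = (P j.castSucc - P j.succ) + ((q : ℤ) - 1) * s j.castSucc
          + (k - 1 + stmt12c I j.succ) * ((q : ℤ) ^ (j.succ : ℕ) - 1) := by
    simp only [stmt12Map_castSucc, stmt12Slack, P, s, Fin.val_castSucc, Fin.val_succ]
    push_cast
    ring
  have hlast :
      ((q : ℤ) ^ ((Fin.last m : ℕ) + 1) - 1) * stmt12Map (m + 1) q k l I lam (Fin.last m)
        = P (Fin.last m) + ((q : ℤ) - 1) * s (Fin.last m) - ((q : ℤ) ^ (m + 1) - 1) := by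
    simp only [stmt12Map_last, P, s, Fin.val_last]
    push_cast
    ring
  have htelescope : ∑ j : Fin m, P j.castSucc + P (Fin.last m) = ∑ j : Fin m, P j.succ := by
    rw [← Fin.sum_univ_castSucc, Fin.sum_univ_succ]
    simp [P]
  rw [Fin.sum_univ_castSucc, Fin.sum_univ_castSucc s, Fin.sum_univ_succ (n := m),
    sum_congr rfl fun j _ => hterm j, hlast]
  simp only [sum_add_distrib, sum_sub_distrib, ← mul_sum]
  simp only [Fin.val_succ, Fin.coe_ofNat_eq_mod, Nat.zero_mod, pow_zero, sub_self, mul_zero,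
    zero_add]
  linear_combination htelescope

theorem stmt12_sum_identity :
    ((q : ℤ) - 1) * (∑ i : Fin (m + 1), (((m + 1 : ℕ) : ℤ) - 1 - (i : ℕ)))
        + ((q : ℤ) - 1) * (∑ i, lam i) - (m + 1 : ℕ) * k - (∑ j : Fin l, ((I j).card : ℤ))
      = (∑ i : Fin (m + 1), ((q : ℤ) ^ ((i : ℕ) + 1) - 1) * stmt12Map (m + 1) q k l I lam i)
          - (m + 1 : ℕ) + ((q : ℤ) - k) * (∑ i ∈ range (m + 1), (q : ℤ) ^ i)
          - ∑ j : Fin l, ∑ i ∈ I j, (q : ℤ) ^ (i : ℕ) := by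
  have hcard : ∑ j : Fin l, ((I j).card : ℤ) = ∑ j, ∑ i ∈ I j, (1 : ℤ) := by simp
  have hgeom := geom_sum_mul (q : ℤ) (m + 1)
  rw [← Fin.sum_univ_eq_sum_range] at hgeom ⊢
  rw [hcard, sum_sum_mem_eq_sum_stmt12c_smul, sum_sum_mem_eq_sum_stmt12c_smul,
    sum_pow_sub_one_mul_stmt12Map]
  simp only [nsmul_eq_mul, mul_one, add_mul, sub_mul, mul_sub, sum_add_distrib, sum_sub_distrib,
    ← mul_sum]
  simp only [Nat.cast_add, Nat.cast_one, sum_const, card_univ, Fintype.card_fin, Int.nsmul_eq_mul,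
    one_mul, mul_one]
  linear_combination -hgeom

end

/-- Fix `n, q ≥ 2`, a partition `ν = (ν_1 ≥ … ≥ ν_ℓ)` with positive parts,
`ν_1 ≤ n`, and `k ≥ 1` with `k + ℓ ≤ q - 1`.  For each choice of subsets
`1 ≤ i^j_1 < ⋯ < i^j_{ν_j} ≤ n` (encoded as `I j ⊆ Fin n` with `|I j| = ν j`), and with
`c_i = #{(b,u) : i^b_u = i}`, the assignment above is a bijection between the dominant
`λ ∈ ℤ^n` satisfying `(q-1)ρ_i + (q-1)λ_i - k - c_i ≥ 0` for all `i` and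
`(q-1)ρ_i + qλ_i - c_i ≤ λ_{i-1} + k` for `2 ≤ i ≤ n`, and `ℤ₊ⁿ`; and under this bijection
`(q-1)∑ρ_i + (q-1)∑λ_i - nk - |ν|
  = ∑_{i=1}^n (q^i - 1)λ̄_i - n + (q-k)(q^n-1)/(q-1) - ∑_{b,u} q^{i^b_u - 1}`
(with `(q^n-1)/(q-1) = ∑_{i<n} q^i` and `∑_{b,u} q^{i^b_u-1} = ∑_j ∑_{i ∈ I j} q^i`). -/
theorem stmt12 (n q k l : ℕ) (hn : 2 ≤ n)
    (nu : Fin l → ℕ)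
    (hk : 1 ≤ k) (hkl : k + l ≤ q - 1)
    (I : Fin l → Finset (Fin n)) (hI : ∀ j, (I j).card = nu j) :
    Set.BijOn (stmt12Map n q k l I)
      {lam : Fin n → ℤ | Antitone lam ∧
        (∀ i : Fin n,
          0 ≤ ((q : ℤ) - 1) * ((n : ℤ) - 1 - (i : ℕ)) + ((q : ℤ) - 1) * lam i - k
                - stmt12c I i) ∧
        (∀ i : Fin n, 0 < (i : ℕ) →
          ((q : ℤ) - 1) * ((n : ℤ) - 1 - (i : ℕ)) + q * lam i - stmt12c I i
            ≤ lam ⟨(i : ℕ) - 1, by omega⟩ + k)}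
      {lb : Fin n → ℤ | ∀ i, 0 ≤ lb i}
    ∧ ∀ lam : Fin n → ℤ,
        lam ∈ {lam : Fin n → ℤ | Antitone lam ∧
          (∀ i : Fin n,
            0 ≤ ((q : ℤ) - 1) * ((n : ℤ) - 1 - (i : ℕ)) + ((q : ℤ) - 1) * lam i - k
                  - stmt12c I i) ∧
          (∀ i : Fin n, 0 < (i : ℕ) →
            ((q : ℤ) - 1) * ((n : ℤ) - 1 - (i : ℕ)) + q * lam i - stmt12c I i
              ≤ lam ⟨(i : ℕ) - 1, by omega⟩ + k)} →
        ((q : ℤ) - 1) * (∑ i : Fin n, ((n : ℤ) - 1 - (i : ℕ)))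
            + ((q : ℤ) - 1) * (∑ i : Fin n, lam i) - n * k - (∑ j : Fin l, (nu j : ℤ))
          = (∑ i : Fin n, ((q : ℤ) ^ ((i : ℕ) + 1) - 1) * stmt12Map n q k l I lam i)
              - n + ((q : ℤ) - k) * (∑ i ∈ range n, (q : ℤ) ^ i)
              - ∑ j : Fin l, ∑ i ∈ I j, (q : ℤ) ^ (i : ℕ) := by
  obtain ⟨m, rfl⟩ : ∃ m, n = m + 1 := ⟨n - 1, by omega⟩
  refine ⟨?_, fun lam _ => ?_⟩
  · have hbij : (stmt12Map (m + 1) q k l I).Bijective :=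
      bijective_of_backward_recurrence _
        (fun j w => w + stmt12Slack (m + 1) q k (stmt12c I) j.succ w) 1 (stmt12Map_last I)
        fun lam j => by rw [stmt12Map_castSucc]; abel
    have hdomain : stmt12Domain (m + 1) q k l I
        = stmt12Map (m + 1) q k l I ⁻¹' {lb | ∀ i, 0 ≤ lb i} :=
      Set.ext fun lam => mem_stmt12Domain_iff I lam hk hkl
    change Set.BijOn _ (stmt12Domain (m + 1) q k l I) _
    rw [hdomain]
    exact hbij.bijOn_preimage
  · simp only [← hI]
    exact stmt12_sum_identity I lam
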